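/- arXiv:2204.13055 — 3 statements merged into one kernel-verified Lean document; each statement's English description precedes it below -/
import Mathlib

section
/- Let G be a finite group and let E(G) denote the subgroup generated by all components of G. Then the centralizer C_G(E(G)) has no components, and the Fitting subgroup of C_G(E(G)) equals the Fitting subgroup of G; consequently the generalized Fitting subgroup of C_G(E(G)) equals F(G). -/
attribute [local instance] Classical.propDecidable

noncomputable section

namespace QF

/-! ## Group-theoretic notions -/

/-- `H` is a normal subgroup of `K` (as subgroups of an ambient group `G`). -/
def NormalIn {G : Type*} [Group G] (H K : Subgroup G) : Prop :=
  H ≤ K ∧ ∀ k ∈ K, ∀ h ∈ H, k * h * k⁻¹ ∈ H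

/-- `L` is a subnormal subgroup of `G`: there is a finite chain of subgroups from `L` to `G`,
each normal in the next. -/
def IsSubnormal {G : Type*} [Group G] (L : Subgroup G) : Prop :=
  ∃ (n : ℕ) (c : ℕ → Subgroup G), c 0 = L ∧ c n = ⊤ ∧ ∀ i < n, NormalIn (c i) (c (i + 1))

/-- `L` is quasisimple: `L = [L,L]` and `L/Z(L)` is a nonabelian simple group. -/
def IsQuasisimple {G : Type*} [Group G] (L : Subgroup G) : Prop :=
  ⁅L, L⁆ = L ∧ IsSimpleGroup (↥L ⧸ Subgroup.center ↥L) ∧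
    ∃ a b : ↥L ⧸ Subgroup.center ↥L, a * b ≠ b * a

/-- A component of a group: a subnormal quasisimple subgroup. -/
def IsComponent {G : Type*} [Group G] (L : Subgroup G) : Prop :=
  IsSubnormal L ∧ IsQuasisimple L

/-- The Fitting subgroup: the subgroup generated by all nilpotent normal subgroups. -/
def fittingSubgroup (G : Type*) [Group G] : Subgroup G :=
  sSup {N : Subgroup G | N.Normal ∧ Group.IsNilpotent ↥N}

/-- `E(G)`: the subgroup generated by all components of `G`. -/
def layer (G : Type*) [Group G] : Subgroup G :=
  sSup {L : Subgroup G | IsComponent L}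

/-- The generalized Fitting subgroup `F*(G) = F(G) ⬝ E(G)`. -/
def genFitting (G : Type*) [Group G] : Subgroup G :=
  fittingSubgroup G ⊔ layer G

/-- `O_p(G) = 1`: every normal `p`-subgroup of `G` is trivial. -/
def OpTrivial (p : ℕ) (G : Type*) [Group G] : Prop :=
  ∀ N : Subgroup G, N.Normal → IsPGroup p ↥N → N = ⊥

/-- `E` is an elementary abelian `p`-subgroup (possibly trivial). -/
def IsElemAb (p : ℕ) {G : Type*} [Group G] (E : Subgroup G) : Prop :=
  (∀ x ∈ E, ∀ y ∈ E, x * y = y * x) ∧ ∀ x ∈ E, x ^ p = 1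

/-- The Quillen poset `A_p(H)` of nontrivial elementary abelian `p`-subgroups of `G`
contained in the subgroup `H`, regarded as a set of subgroups of `G`. -/
def apIn (p : ℕ) {G : Type*} [Group G] (H : Subgroup G) : Set (Subgroup G) :=
  {E | E ≠ ⊥ ∧ IsElemAb p E ∧ E ≤ H}

/-- The `p`-outer poset of `L` in `G`: nontrivial elementary abelian `p`-subgroups `B`
of `N_G(L)` with `B ∩ (L C_G(L)) = 1`. -/
def outPoset (p : ℕ) {G : Type*} [Group G] (L : Subgroup G) : Set (Subgroup G) :=
  {B | B ≠ ⊥ ∧ IsElemAb p B ∧ B ≤ Subgroup.normalizer (L : Set G) ∧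
    B ⊓ (L ⊔ Subgroup.centralizer (L : Set G)) = ⊥}

/-- The `p`-rank of a group: the largest `n` such that `K` contains an elementary abelian
`p`-subgroup of order `p ^ n`. -/
def pRank (p : ℕ) (K : Type*) [Group K] : ℕ :=
  sSup {n : ℕ | ∃ E : Subgroup K, IsElemAb p E ∧ Nat.card ↥E = p ^ n}

/-- The `p`-local `q`-rank of a group `K`: the maximum of the `q`-ranks of normalizers of
nontrivial `p`-subgroups. -/
def pLocalRank (p q : ℕ) (K : Type*) [Group K] : ℕ :=
  sSup {n : ℕ | ∃ P : Subgroup K, P ≠ ⊥ ∧ IsPGroup p ↥P ∧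
    ∃ E : Subgroup K, E ≤ Subgroup.normalizer (P : Set K) ∧ IsElemAb q E ∧ Nat.card ↥E = q ^ n}

/-- A group is `q`-elementary if it is the (internal) direct product of a cyclic group and
a `q`-group. -/
def qElementary (q : ℕ) (G : Type*) [Group G] : Prop :=
  ∃ C R : Subgroup G, IsCyclic ↥C ∧ IsPGroup q ↥R ∧
    (∀ c ∈ C, ∀ r ∈ R, c * r = r * c) ∧ C ⊓ R = ⊥ ∧ C ⊔ R = ⊤

/-! ## The augmented rational chain complex of a finite poset

We represent a rational simplicial chain of (degree `k - 1`) of a poset `α` as a function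
`Finset α → ℚ` supported on the `k`-element chains of `α`. -/

/-- The coefficient of the face `t` in the boundary of the simplex `s`: if `t ⊆ s` with
exactly one element `x` of `s` deleted, this is `(-1) ^ (number of elements of s below x)`. -/
def bdryCoeff {α : Type*} [PartialOrder α] (s t : Finset α) : ℚ :=
  if t ⊆ s ∧ t.card + 1 = s.card then
    ∑ x ∈ s \ t, (-1 : ℚ) ^ (s.filter fun y => y < x).card
  else 0

/-- The simplicial boundary operator (on functions `Finset α → ℚ`). -/
def bdryFun {α : Type*} [PartialOrder α] (f : Finset α → ℚ) : Finset α → ℚ :=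
  fun t => ∑ᶠ s : Finset α, bdryCoeff s t * f s

/-- `f` is a chain of size `k` (i.e. simplicial degree `k - 1`) of the subposet `S` of `α`:
it is supported on totally ordered `k`-element subsets of `S`. -/
def SuppOn {α : Type*} [PartialOrder α] (S : Set α) (k : ℕ) (f : Finset α → ℚ) : Prop :=
  ∀ s, f s ≠ 0 → s.card = k ∧ IsChain (· ≤ ·) (↑s : Set α) ∧ ↑s ⊆ S

/-- `f` is a cycle of size `k` (degree `k - 1`) of the augmented rational chain complex of
the subposet `S`. -/
def IsCycleOn {α : Type*} [PartialOrder α] (S : Set α) (k : ℕ) (f : Finset α → ℚ) : Prop :=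
  SuppOn S k f ∧ bdryFun f = 0

/-- `f` is a boundary of size `k` (degree `k - 1`) in the augmented rational chain complex of
the subposet `S`. -/
def IsBoundaryOn {α : Type*} [PartialOrder α] (S : Set α) (k : ℕ) (f : Finset α → ℚ) : Prop :=
  ∃ g : Finset α → ℚ, SuppOn S (k + 1) g ∧ bdryFun g = f

/-- The reduced rational homology of the subposet `S` is nonzero in degree `k - 1`. -/
def RHomNZ {α : Type*} [PartialOrder α] (S : Set α) (k : ℕ) : Prop :=
  ∃ f : Finset α → ℚ, IsCycleOn S k f ∧ ¬ IsBoundaryOn S k f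

/-- The reduced Euler characteristic of the subposet `S`:
`χ̃(S) = ∑_{n ≥ -1} (-1)^n f_n(S)` where `f_n` is the number of `(n+1)`-element chains. -/
def redEuler {α : Type*} [PartialOrder α] (S : Set α) : ℤ :=
  ∑ᶠ s : Finset α,
    if IsChain (· ≤ ·) (↑s : Set α) ∧ ↑s ⊆ S then (-1 : ℤ) ^ (s.card + 1) else 0

/-! ## Chains in a subcomplex of the order complex -/

/-- `f` is a chain of size `k` supported on the subcomplex `M` (together with the empty chain,
for the augmentation). -/
def SuppM {α : Type*} [PartialOrder α] (M : Set (Finset α)) (k : ℕ) (f : Finset α → ℚ) : Prop :=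
  ∀ s, f s ≠ 0 → s.card = k ∧ (s = ∅ ∨ s ∈ M)

/-- `f` is a cycle of size `k` of the (augmented) chain complex of the subcomplex `M`. -/
def IsCycleM {α : Type*} [PartialOrder α] (M : Set (Finset α)) (k : ℕ) (f : Finset α → ℚ) :
    Prop :=
  SuppM M k f ∧ bdryFun f = 0

/-- `f` is a boundary of size `k` in the (augmented) chain complex of the subcomplex `M`. -/
def IsBoundaryM {α : Type*} [PartialOrder α] (M : Set (Finset α)) (k : ℕ) (f : Finset α → ℚ) :
    Prop :=
  ∃ g : Finset α → ℚ, SuppM M (k + 1) g ∧ bdryFun g = f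

/-! ## Quillen-conjecture properties -/

/-- `G` satisfies (H-QC) at `p`: if `O_p(G) = 1` then `A_p(G)` has nonzero reduced rational
homology in some degree. -/
def HQC (p : ℕ) (G : Type*) [Group G] : Prop :=
  OpTrivial p G → ∃ k : ℕ, RHomNZ (apIn p (⊤ : Subgroup G)) k

/-- `K` has Quillen dimension at `p`: if `O_p(K) = 1` then `A_p(K)` has nonzero reduced
rational homology in degree `m_p(K) - 1`. -/
def QDp (p : ℕ) (K : Type*) [Group K] : Prop :=
  OpTrivial p K → RHomNZ (apIn p (⊤ : Subgroup K)) (pRank p K)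

/-- The fixed-point subposet `A_p(H)^Q` under conjugation by the subgroup `Q`. -/
def apFixed (p : ℕ) {G : Type*} [Group G] (H Q : Subgroup G) : Set (Subgroup G) :=
  {E | E ∈ apIn p H ∧ ∀ x ∈ Q, ∀ g : G, g ∈ E ↔ x * g * x⁻¹ ∈ E}

/-- The fixed-point subposet `A_p(H)^g` under conjugation by the element `g`. -/
def apFixedElt (p : ℕ) {G : Type*} [Group G] (H : Subgroup G) (g : G) : Set (Subgroup G) :=
  {E | E ∈ apIn p H ∧ ∀ h : G, h ∈ E ↔ g * h * g⁻¹ ∈ E}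

/-- Property `R(2)` for a (nonabelian simple) group `L`. -/
def PropertyR2 (L : Type*) [Group L] : Prop :=
  ∃ Q : Subgroup L, qElementary 3 ↥Q ∧ Odd (Nat.card ↥Q) ∧ ¬ OpTrivial 3 ↥Q ∧
    ¬ ((3 : ℤ) ∣ redEuler (apFixed 2 (⊤ : Subgroup L) Q)) ∧
    ∀ E : Subgroup (MulAut L), E ≠ ⊥ → IsElemAb 2 E →
      E ≤ Subgroup.centralizer
        ((Subgroup.map (MulAut.conj : L →* MulAut L) Q : Subgroup (MulAut L)) : Set (MulAut L)) →
      E ≤ (MulAut.conj : L →* MulAut L).range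

/-! ## The pre-join of posets and the initial shuffle product -/

/-- The pre-join of `X` and `Y`: the poset `(C⁻X × C⁻Y) \ {(⊥, ⊥)}`. -/
abbrev PreJoin (X Y : Type*) := {p : WithBot X × WithBot Y // p ≠ (⊥, ⊥)}

/-- The embedding of `X` into the pre-join, `x ↦ (x, ⊥)`. -/
def inX {X Y : Type*} (x : X) : PreJoin X Y :=
  ⟨((x : WithBot X), ⊥), fun h => WithBot.coe_ne_bot (congrArg Prod.fst h)⟩

/-- The embedding of `Y` into the pre-join, `y ↦ (⊥, y)`. -/
def inY {X Y : Type*} (y : Y) : PreJoin X Y :=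
  ⟨(⊥, (y : WithBot Y)), fun h => WithBot.coe_ne_bot (congrArg Prod.snd h)⟩

/-- The element `(x, y)` of the pre-join. -/
def inXY {X Y : Type*} (x : X) (y : Y) : PreJoin X Y :=
  ⟨((x : WithBot X), (y : WithBot Y)), fun h => WithBot.coe_ne_bot (congrArg Prod.fst h)⟩

/-- `c` is a shuffle chain for the pair `(a, b)`: a maximal chain of the grid poset determined
by the `X`-part of `a` and by `b` (with the bottom `(⊥, ⊥)` removed), i.e. a chain of the
pre-join of cardinality `|a_X| + |b|` whose coordinates come from `a` and `b`. -/
def gridOK {X Y W : Type*} [PartialOrder X] [PartialOrder Y] [PartialOrder W]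
    (ιP : PreJoin X Y ↪o W) (a b : Finset W) (c : Finset (PreJoin X Y)) : Prop :=
  IsChain (· ≤ ·) (↑c : Set (PreJoin X Y)) ∧
  c.card = (a.filter fun w => ∃ x : X, w = ιP (inX x)).card + b.card ∧
  ∀ q ∈ c, (q.1.1 = ⊥ ∨ ∃ x : X, q.1.1 = (x : WithBot X) ∧ ιP (inX x) ∈ a) ∧
    (q.1.2 = ⊥ ∨ ∃ y : Y, q.1.2 = (y : WithBot Y) ∧ ιP (inY y) ∈ b)

/-- The number of inversions of the shuffle chain `c` (the number of cells of the
`a_X × b` rectangle lying below the corresponding lattice path). -/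
def invCount {X Y W : Type*} [PartialOrder X] [PartialOrder Y] [PartialOrder W]
    (ιP : PreJoin X Y ↪o W) (a b : Finset W) (c : Finset (PreJoin X Y)) : ℕ :=
  Set.ncard {xy : X × Y | ιP (inX xy.1) ∈ a ∧ ιP (inY xy.2) ∈ b ∧
    ∀ q ∈ c, q.1.1 = (xy.1 : WithBot X) → (xy.2 : WithBot Y) ≤ q.1.2}

/-- The coefficient of the chain `e` of `W` in the initial shuffle product `T(a, b)`. -/
def Tcoeff {X Y Z W : Type*} [PartialOrder X] [PartialOrder Y] [PartialOrder Z] [PartialOrder W]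
    (ιP : PreJoin X Y ↪o W) (ιZ : Z ↪o W) (a b e : Finset W) : ℚ :=
  ∑ᶠ c : Finset (PreJoin X Y),
    if gridOK ιP a b c ∧
        e = c.image (fun q => ιP q) ∪ a.filter (fun w => ∃ z : Z, w = ιZ z) then
      (-1 : ℚ) ^ invCount ιP a b c
    else 0

/-- The initial shuffle product `T_*(f ⊗ g)`, as a function on `Finset W`. -/
def Tmap {X Y Z W : Type*} [PartialOrder X] [PartialOrder Y] [PartialOrder Z] [PartialOrder W]
    (ιP : PreJoin X Y ↪o W) (ιZ : Z ↪o W) (f g : Finset W → ℚ) : Finset W → ℚ :=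
  fun e => ∑ᶠ a : Finset W, ∑ᶠ b : Finset W, f a * g b * Tcoeff ιP ιZ a b e

/-! Components commute with nilpotent normal subgroups: induct along the subnormal chain,
using that a normal nilpotent subgroup of a quasisimple group is central and the three subgroups
lemma. Hence `F(G) ≤ C := C_G(E(G))`. A component of the normal subgroup `C` is a component of
`G`, so it lies in `E(G)` and would be abelian; thus `E(C) = 1`. Finally `F(C)` is generated by
the `p`-cores `O_p(C)`, which are characteristic in `C`, hence nilpotent normal subgroups of `G`;
conversely every nilpotent normal subgroup of `G` lies in `C` and is normal there. -/

open Subgroup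

section Basic

variable {G H : Type*} [Group G] [Group H]

lemma isNilpotent_of_le {K N : Subgroup G} (h : K ≤ N) [Group.IsNilpotent N] :
    Group.IsNilpotent K :=
  Group.nilpotent_of_mulEquiv (subgroupOfEquivOfLe h)

lemma isNilpotent_subgroupOf {K C : Subgroup G} (h : K ≤ C) [Group.IsNilpotent K] :
    Group.IsNilpotent (K.subgroupOf C) :=
  Group.nilpotent_of_mulEquiv (subgroupOfEquivOfLe h).symm

lemma NormalIn.map (f : G →* H) {A B : Subgroup G} (h : NormalIn A B) :
    NormalIn (A.map f) (B.map f) := by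
  refine ⟨map_mono h.1, ?_⟩
  rintro _ ⟨b, hb, rfl⟩ _ ⟨a, ha, rfl⟩
  exact ⟨b * a * b⁻¹, h.2 b hb a ha, by simp⟩

lemma NormalIn.commutator_le_right {A B K : Subgroup G} (h : NormalIn A B) (hK : K ≤ B) :
    ⁅K, A⁆ ≤ A :=
  commutator_le.mpr fun k hk a ha =>
    mul_mem (h.2 k (hK hk) a ha) (inv_mem ha)

lemma NormalIn.commutator_le_left {A B K : Subgroup G} (h : NormalIn A B) (hK : K ≤ B) :
    ⁅A, K⁆ ≤ A :=
  commutator_comm K A ▸ h.commutator_le_right hK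

lemma IsSubnormal.map (f : G →* H) (hf : f.range.Normal) {L : Subgroup G}
    (h : IsSubnormal L) : IsSubnormal (L.map f) := by
  obtain ⟨n, c, h0, hn, hc⟩ := h
  refine ⟨n + 1, fun i => if i ≤ n then (c i).map f else ⊤, by simp [h0], by simp, ?_⟩
  intro i hi
  rcases Nat.lt_or_ge i n with hin | hin
  · simp only [if_pos hin.le, if_pos (Nat.succ_le_of_lt hin)]
    exact (hc i hin).map f
  · obtain rfl : i = n := by omega
    simp only [le_refl, if_true, Nat.not_succ_le_self, if_false, hn, ← MonoidHom.range_eq_map]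
    exact ⟨le_top, fun k _ h hh => hf.conj_mem h hh k⟩

end Basic

section Quasisimple

variable {G H : Type*} [Group G] [Group H]

lemma map_center_of_mulEquiv (e : G ≃* H) : (center G).map (e : G →* H) = center H := by
  ext x
  constructor
  · rintro ⟨y, hy, rfl⟩
    rw [coe_center] at hy
    rw [← SetLike.mem_coe, coe_center]
    exact MulEquivClass.apply_mem_center e hy
  · intro hx
    rw [← SetLike.mem_coe, coe_center] at hx
    refine ⟨e.symm x, ?_, e.apply_symm_apply x⟩
    rw [coe_center]
    exact MulEquivClass.apply_mem_center e.symm hx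

lemma IsQuasisimple.map {f : G →* H} (hf : Function.Injective f) {L : Subgroup G}
    (h : IsQuasisimple L) : IsQuasisimple (L.map f) := by
  obtain ⟨hperf, hsimple, a, b, hab⟩ := h
  let e := L.equivMapOfInjective f hf
  let q := QuotientGroup.congr _ _ e (map_center_of_mulEquiv e)
  refine ⟨by rw [← map_commutator, hperf], q.symm.isSimpleGroup, q a, q b, fun hqab => hab ?_⟩
  exact q.injective (by simpa only [map_mul] using hqab)

lemma IsQuasisimple.not_le_centralizer {L : Subgroup G} (h : IsQuasisimple L) :
    ¬ L ≤ centralizer (L : Set G) := by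
  intro hL
  obtain ⟨-, -, a, b, hab⟩ := h
  have hcenter : center L = ⊤ :=
    eq_top_iff.mpr fun x _ => mem_center_iff.mpr fun y => Subtype.ext (hL x.2 y y.2)
  have : Subsingleton (L ⧸ center L) := by
    rw [hcenter]
    exact QuotientGroup.subsingleton_quotient_top
  exact hab (Subsingleton.elim _ _)

/-- Otherwise the image of `N` would be the whole central quotient, a nilpotent simple group,
hence abelian. -/
lemma le_center_of_isNilpotent [IsSimpleGroup (G ⧸ center G)]
    (hnc : ∃ a b : G ⧸ center G, a * b ≠ b * a) {N : Subgroup G} (hN : N.Normal)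
    [Group.IsNilpotent N] : N ≤ center G := by
  let π := QuotientGroup.mk' (center G)
  rcases (hN.map π (QuotientGroup.mk'_surjective _)).eq_bot_or_eq_top with h | h
  · rwa [Subgroup.map_eq_bot_iff, QuotientGroup.ker_mk'] at h
  · have hsurj : Function.Surjective (π.comp N.subtype) := fun x => by
      obtain ⟨n, hn, rfl⟩ := h ▸ mem_top x
      exact ⟨⟨n, hn⟩, rfl⟩
    have := Group.nilpotent_of_surjective _ hsurj
    obtain ⟨a, b, hab⟩ := hnc
    exact (hab (IsSimpleGroup.comm_iff_isSolvable.mpr inferInstance a b)).elim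

lemma IsQuasisimple.commutator_eq_bot_of_normalIn {L N : Subgroup G} (hL : IsQuasisimple L)
    (hN : NormalIn N L) [Group.IsNilpotent N] : ⁅L, N⁆ = ⊥ := by
  obtain ⟨-, hsimple, hnc⟩ := hL
  have hnorm : (N.subgroupOf L).Normal :=
    (normal_subgroupOf_iff hN.1).mpr fun h k hh hk => hN.2 k hk h hh
  have := isNilpotent_subgroupOf hN.1
  have hZ := le_center_of_isNilpotent hnc hnorm
  refine commutator_eq_bot_iff_le_centralizer.mpr fun x hx => mem_centralizer_iff.mpr ?_
  intro y hy
  have hyZ := hZ (show ⟨y, hN.1 hy⟩ ∈ N.subgroupOf L from hy)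
  exact (congrArg Subtype.val (mem_center_iff.mp hyZ ⟨x, hx⟩)).symm

/-- Three subgroups lemma: `[L, N] ≤ N ∩ A` is centralized by `L`, hence so is
`[[L, L], N] = [L, N]`. -/
lemma commutator_eq_bot_of_commutator_inf_eq_bot {L A B N : Subgroup G} (hperf : ⁅L, L⁆ = L)
    (hLA : L ≤ A) (hA : NormalIn A B) (hN : NormalIn N B) (h : ⁅L, N ⊓ A⁆ = ⊥) :
    ⁅L, N⁆ = ⊥ := by
  have hsub : ⁅L, N⁆ ≤ N ⊓ A :=
    le_inf (hN.commutator_le_right (hLA.trans hA.1))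
      ((commutator_mono hLA le_rfl).trans (hA.commutator_le_left hN.1))
  have h1 : ⁅⁅L, N⁆, L⁆ = ⊥ := by
    rw [eq_bot_iff, ← h, commutator_comm L (N ⊓ A)]
    exact commutator_mono hsub le_rfl
  have h2 : ⁅⁅N, L⁆, L⁆ = ⊥ := by rwa [commutator_comm N L]
  simpa only [hperf] using commutator_commutator_eq_bot_of_rotate h1 h2

end Quasisimple

section Components

variable {G H : Type*} [Group G] [Group H]

lemma IsComponent.map {f : G →* H} (hf : Function.Injective f) (hrange : f.range.Normal)
    {L : Subgroup G} (hL : IsComponent L) : IsComponent (L.map f) :=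
  ⟨hL.1.map f hrange, hL.2.map hf⟩

theorem IsComponent.commutator_eq_bot {L N : Subgroup G} (hL : IsComponent L) (hN : N.Normal)
    [Group.IsNilpotent N] : ⁅L, N⁆ = ⊥ := by
  obtain ⟨⟨n, c, h0, hn, hc⟩, hq⟩ := hL
  suffices ∀ k ≤ n, L ≤ c k ∧
      ∀ N : Subgroup G, NormalIn N (c k) → Group.IsNilpotent N → ⁅L, N⁆ = ⊥ from
    (this n le_rfl).2 N ⟨hn ▸ le_top, fun k _ h hh => hN.conj_mem h hh k⟩ ‹_›
  intro k hk
  induction k with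
  | zero => exact ⟨h0.ge, fun N hN _ => hq.commutator_eq_bot_of_normalIn (h0 ▸ hN)⟩
  | succ k ih =>
    obtain ⟨hLk, ihN⟩ := ih (by omega)
    have hck := hc k (by omega)
    refine ⟨hLk.trans hck.1, fun N hN _ => ?_⟩
    have hNk : NormalIn (N ⊓ c k) (c k) :=
      ⟨inf_le_right, fun x hx h hh => mem_inf.mpr
        ⟨hN.2 x (hck.1 hx) h (mem_inf.mp hh).1,
          mul_mem (mul_mem hx (mem_inf.mp hh).2) (inv_mem hx)⟩⟩
    exact commutator_eq_bot_of_commutator_inf_eq_bot hq.1 hLk hck hN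
      (ihN _ hNk (isNilpotent_of_le inf_le_left))

instance layer_characteristic : (layer G).Characteristic := by
  refine characteristic_iff_le_comap.mpr fun φ => sSup_le fun L hL => ?_
  have hrange : φ.toMonoidHom.range.Normal := by
    rw [MonoidHom.range_eq_top.mpr φ.surjective]
    infer_instance
  exact map_le_iff_le_comap.mp (le_sSup (hL.map φ.injective hrange))

lemma layer_eq_bot (h : ∀ L : Subgroup G, ¬ IsComponent L) : layer G = ⊥ :=
  sSup_eq_bot.mpr fun L hL => (h L hL).elim

lemma fittingSubgroup_le_centralizer_layer :
    fittingSubgroup G ≤ centralizer (layer G : Set G) :=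
  sSup_le fun _ ⟨hN, _⟩ => le_centralizer_iff.mpr <| sSup_le fun _ hL =>
    commutator_eq_bot_iff_le_centralizer.mp (hL.commutator_eq_bot hN)

lemma not_isComponent_centralizer_layer (M : Subgroup (centralizer (layer G : Set G))) :
    ¬ IsComponent M := by
  intro hM
  have hL := hM.map (subtype_injective _) (by rw [range_subtype]; infer_instance)
  exact hL.2.not_le_centralizer
    ((map_subtype_le M).trans (centralizer_le (le_sSup hL : M.map _ ≤ layer G)))

end Components

section Fitting

variable {G : Type*} [Group G]

def pCore (p : ℕ) (G : Type*) [Group G] : Subgroup G :=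
  sSup {P : Subgroup G | P.Normal ∧ IsPGroup p P}

lemma le_pCore {p : ℕ} {P : Subgroup G} (hP : P.Normal) (hp : IsPGroup p P) :
    P ≤ pCore p G :=
  le_sSup ⟨hP, hp⟩

lemma isPGroup_pCore (p : ℕ) : IsPGroup p (pCore p G) :=
  Sylow.sSup_of_normal _ (fun _ hP => hP.2) (fun _ hP => hP.1)

instance pCore_characteristic (p : ℕ) : (pCore p G).Characteristic :=
  characteristic_iff_le_comap.mpr fun φ => sSup_le fun _ ⟨hP, hp⟩ =>
    map_le_iff_le_comap.mp (le_pCore (hP.map _ φ.surjective) (hp.map _))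

/-- The index of `K` divides that of each Sylow subgroup, so no prime divides it. -/
lemma eq_top_of_forall_exists_sylow_le [Finite G] {K : Subgroup G}
    (h : ∀ (p : ℕ) [Fact p.Prime], ∃ P : Sylow p G, (P : Subgroup G) ≤ K) : K = ⊤ := by
  rw [← index_eq_one]
  by_contra hK
  obtain ⟨q, hq, hdvd⟩ := Nat.exists_prime_and_dvd hK
  have : Fact q.Prime := ⟨hq⟩
  obtain ⟨P, hP⟩ := h q
  exact P.not_dvd_index (hdvd.trans (index_dvd_of_le hP))

/-- A nilpotent normal subgroup is generated by its Sylow subgroups, each of which is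
characteristic in it and hence normal in `G`. -/
lemma fittingSubgroup_le_iSup_pCore [Finite G] :
    fittingSubgroup G ≤ ⨆ p : Nat.Primes, pCore p G := by
  refine sSup_le fun N ⟨hN, _⟩ => ?_
  rw [← subgroupOf_eq_top]
  refine eq_top_of_forall_exists_sylow_le fun p hp => ⟨default, fun x hx => ?_⟩
  let P : Sylow p N := default
  have := P.characteristic_of_normal inferInstance
  exact le_iSup (fun q : Nat.Primes => pCore q G) ⟨p, hp.out⟩
    (le_pCore inferInstance (P.isPGroup'.map N.subtype) ⟨x, hx, rfl⟩)

lemma map_fittingSubgroup_le [Finite G] {C : Subgroup G} [C.Normal] :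
    (fittingSubgroup C).map C.subtype ≤ fittingSubgroup G := by
  refine (map_mono fittingSubgroup_le_iSup_pCore).trans ?_
  rw [Subgroup.map_iSup]
  refine iSup_le fun p => le_sSup ⟨inferInstance, ?_⟩
  have : Fact p.1.Prime := ⟨p.2⟩
  exact ((isPGroup_pCore p.1).map C.subtype).isNilpotent

lemma fittingSubgroup_le_map_fittingSubgroup {C : Subgroup G} (h : fittingSubgroup G ≤ C) :
    fittingSubgroup G ≤ (fittingSubgroup C).map C.subtype := by
  refine sSup_le fun N ⟨hN, hnil⟩ => ?_
  have hNC : N ≤ C := (le_sSup ⟨hN, hnil⟩ : N ≤ fittingSubgroup G).trans h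
  have hN' : N.subgroupOf C ≤ fittingSubgroup C :=
    le_sSup ⟨hN.subgroupOf C, isNilpotent_subgroupOf hNC⟩
  simpa only [subgroupOf_map_subtype, inf_eq_left.mpr hNC] using map_mono (f := C.subtype) hN'

end Fitting

/-- For a finite group `G`, the centralizer `C_G(E(G))` has no components,
its Fitting subgroup equals the Fitting subgroup of `G`, and consequently its generalized
Fitting subgroup equals `F(G)`. -/
theorem statement0 {G : Type*} [Group G] [Finite G] :
    (¬ ∃ M : Subgroup ↥(Subgroup.centralizer (layer G : Set G)), IsComponent M) ∧
    Subgroup.map (Subgroup.centralizer (layer G : Set G)).subtype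
      (fittingSubgroup ↥(Subgroup.centralizer (layer G : Set G))) = fittingSubgroup G ∧
    Subgroup.map (Subgroup.centralizer (layer G : Set G)).subtype
      (genFitting ↥(Subgroup.centralizer (layer G : Set G))) = fittingSubgroup G := by
  have hF : (fittingSubgroup (centralizer (layer G : Set G))).map (centralizer _).subtype =
      fittingSubgroup G :=
    le_antisymm map_fittingSubgroup_le
      (fittingSubgroup_le_map_fittingSubgroup fittingSubgroup_le_centralizer_layer)
  refine ⟨fun ⟨M, hM⟩ => not_isComponent_centralizer_layer M hM, hF, ?_⟩
  rw [genFitting, layer_eq_bot not_isComponent_centralizer_layer, sup_bot_eq, hF]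

end QF
end
end

section
/- Let p be a prime, H ≤ K finite groups, and let E be a nontrivial elementary abelian p-subgroup of K with E ∩ H = 1. Let P be the poset (under inclusion) of those B ∈ A_p(K) with B > E and B ∩ H ≠ 1, and let Q = A_p(C_H(E)). Then B ↦ B ∩ H defines a well-defined monotone map f : P → Q, and C ↦ EC (the subgroup generated by E and C) defines a well-defined monotone map g : Q → P, and these satisfy g(f(B)) = E(B ∩ H) ≤ B for all B ∈ P and f(g(C)) = EC ∩ H ≥ C for all C ∈ Q. -/
attribute [local instance] Classical.propDecidable

noncomputable section

namespace QF

open Subgroup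

theorem lt_sup_of_inf_eq_bot {α : Type*} [Lattice α] [OrderBot α] {a b c : α}
    (hab : a ⊓ b = ⊥) (hc : c ≠ ⊥) (hcb : c ≤ b) : a < a ⊔ c :=
  left_lt_sup.2 fun hca => hc (eq_bot_iff.2 (hab ▸ le_inf hca hcb))

section

variable {K : Type*} [Group K] {p : ℕ}

theorem IsElemAb.mono {A B : Subgroup K} (hB : IsElemAb p B) (hAB : A ≤ B) : IsElemAb p A :=
  ⟨fun x hx y hy => hB.1 x (hAB hx) y (hAB hy), fun x hx => hB.2 x (hAB hx)⟩

theorem IsElemAb.le_centralizer {E : Subgroup K} (hE : IsElemAb p E) :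
    E ≤ centralizer (E : Set K) :=
  fun x hx y hy => hE.1 y hy x hx

theorem IsElemAb.le_centralizer_of_le {E B : Subgroup K} (hB : IsElemAb p B) (hEB : E ≤ B) :
    B ≤ centralizer (E : Set K) :=
  hB.le_centralizer.trans (centralizer_le hEB)

theorem sup_le_centralizer_sup {E C : Subgroup K} (hE : E ≤ centralizer (E : Set K))
    (hC : C ≤ centralizer (C : Set K)) (hCE : C ≤ centralizer (E : Set K)) :
    E ⊔ C ≤ centralizer ((E ⊔ C : Subgroup K) : Set K) :=
  sup_le (le_centralizer_iff.mp (sup_le hE hCE))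
    (le_centralizer_iff.mp (sup_le (le_centralizer_iff.mp hCE) hC))

theorem IsElemAb.sup {E C : Subgroup K} (hE : IsElemAb p E) (hC : IsElemAb p C)
    (hCE : C ≤ centralizer (E : Set K)) : IsElemAb p (E ⊔ C) := by
  have hcomm := sup_le_centralizer_sup hE.le_centralizer hC.le_centralizer hCE
  refine ⟨fun x hx y hy => hcomm hy x hx, fun x hx => ?_⟩
  rw [sup_eq_closure] at hx
  induction hx using closure_induction with
  | mem z hz => exact hz.elim (hE.2 z) (hC.2 z)
  | one => exact one_pow p
  | mul a b ha hb iha ihb =>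
    rw [← sup_eq_closure] at ha hb
    rw [Commute.mul_pow (hcomm hb a ha), iha, ihb, one_mul]
  | inv a _ iha => rw [inv_pow, iha, inv_one]

theorem inf_mem_apIn {B H : Subgroup K} (hB : B ∈ apIn p (⊤ : Subgroup K)) (hBH : B ⊓ H ≠ ⊥) :
    B ⊓ H ∈ apIn p (⊤ : Subgroup K) :=
  ⟨hBH, hB.2.1.mono inf_le_left, le_top⟩

theorem sup_mem_apIn {E C : Subgroup K} (hE : E ∈ apIn p (⊤ : Subgroup K))
    (hC : IsElemAb p C) (hCE : C ≤ centralizer (E : Set K)) :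
    E ⊔ C ∈ apIn p (⊤ : Subgroup K) :=
  ⟨ne_bot_of_le_ne_bot hE.1 le_sup_left, hE.2.1.sup hC hCE, le_top⟩

end

theorem statement5_general {p : ℕ} {K : Type*} [Group K]
    (H E : Subgroup K) (hE : E ∈ apIn p (⊤ : Subgroup K)) (hEH : E ⊓ H = ⊥) :
    (∀ B : Subgroup K, B ∈ apIn p (⊤ : Subgroup K) → E < B → B ⊓ H ≠ ⊥ →
      (B ⊓ H ∈ apIn p (⊤ : Subgroup K) ∧
        B ⊓ H ≤ H ⊓ Subgroup.centralizer (E : Set K))) ∧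
    (∀ B B' : Subgroup K, B ∈ apIn p (⊤ : Subgroup K) → E < B → B ⊓ H ≠ ⊥ →
      B' ∈ apIn p (⊤ : Subgroup K) → E < B' → B' ⊓ H ≠ ⊥ → B ≤ B' → B ⊓ H ≤ B' ⊓ H) ∧
    (∀ C : Subgroup K, C ∈ apIn p (⊤ : Subgroup K) →
      C ≤ H ⊓ Subgroup.centralizer (E : Set K) →
      (E ⊔ C ∈ apIn p (⊤ : Subgroup K) ∧ E < E ⊔ C ∧ (E ⊔ C) ⊓ H ≠ ⊥)) ∧
    (∀ C C' : Subgroup K, C ∈ apIn p (⊤ : Subgroup K) →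
      C ≤ H ⊓ Subgroup.centralizer (E : Set K) →
      C' ∈ apIn p (⊤ : Subgroup K) → C' ≤ H ⊓ Subgroup.centralizer (E : Set K) →
      C ≤ C' → E ⊔ C ≤ E ⊔ C') ∧
    (∀ B : Subgroup K, B ∈ apIn p (⊤ : Subgroup K) → E < B → B ⊓ H ≠ ⊥ →
      E ⊔ (B ⊓ H) ≤ B) ∧
    (∀ C : Subgroup K, C ∈ apIn p (⊤ : Subgroup K) →
      C ≤ H ⊓ Subgroup.centralizer (E : Set K) → C ≤ (E ⊔ C) ⊓ H) := by
  refine ⟨fun B hB hEB hBH => ⟨inf_mem_apIn hB hBH, ?_⟩,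
    fun B B' _ _ _ _ _ _ hBB' => inf_le_inf_right H hBB',
    fun C hC hCle => ⟨sup_mem_apIn hE hC.2.1 (hCle.trans inf_le_right), ?_, ?_⟩,
    fun C C' _ _ _ _ hCC' => sup_le_sup_left hCC' E,
    fun B _ hEB _ => sup_le hEB.le inf_le_left,
    fun C _ hCle => le_inf le_sup_right (hCle.trans inf_le_left)⟩
  · rw [inf_comm]
    exact inf_le_inf_left H (hB.2.1.le_centralizer_of_le hEB.le)
  · exact lt_sup_of_inf_eq_bot hEH hC.1 (hCle.trans inf_le_left)
  · exact ne_bot_of_le_ne_bot hC.1 (le_inf le_sup_right (hCle.trans inf_le_left))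

/-- for `E ∈ A_p(K)` with `E ∩ H = 1`, the maps `B ↦ B ∩ H` and `C ↦ EC`
between the poset `P = {B ∈ A_p(K) : B > E, B ∩ H ≠ 1}` and `Q = A_p(C_H(E))` are
well-defined and monotone, with `g(f(B)) = E(B ∩ H) ≤ B` and `f(g(C)) = EC ∩ H ≥ C`. -/
theorem statement5 {p : ℕ} (hp : p.Prime) {K : Type*} [Group K] [Finite K]
    (H E : Subgroup K) (hE : E ∈ apIn p (⊤ : Subgroup K)) (hEH : E ⊓ H = ⊥) :
    (∀ B : Subgroup K, B ∈ apIn p (⊤ : Subgroup K) → E < B → B ⊓ H ≠ ⊥ →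
      (B ⊓ H ∈ apIn p (⊤ : Subgroup K) ∧
        B ⊓ H ≤ H ⊓ Subgroup.centralizer (E : Set K))) ∧
    (∀ B B' : Subgroup K, B ∈ apIn p (⊤ : Subgroup K) → E < B → B ⊓ H ≠ ⊥ →
      B' ∈ apIn p (⊤ : Subgroup K) → E < B' → B' ⊓ H ≠ ⊥ → B ≤ B' → B ⊓ H ≤ B' ⊓ H) ∧
    (∀ C : Subgroup K, C ∈ apIn p (⊤ : Subgroup K) →
      C ≤ H ⊓ Subgroup.centralizer (E : Set K) →
      (E ⊔ C ∈ apIn p (⊤ : Subgroup K) ∧ E < E ⊔ C ∧ (E ⊔ C) ⊓ H ≠ ⊥)) ∧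
    (∀ C C' : Subgroup K, C ∈ apIn p (⊤ : Subgroup K) →
      C ≤ H ⊓ Subgroup.centralizer (E : Set K) →
      C' ∈ apIn p (⊤ : Subgroup K) → C' ≤ H ⊓ Subgroup.centralizer (E : Set K) →
      C ≤ C' → E ⊔ C ≤ E ⊔ C') ∧
    (∀ B : Subgroup K, B ∈ apIn p (⊤ : Subgroup K) → E < B → B ⊓ H ≠ ⊥ →
      E ⊔ (B ⊓ H) ≤ B) ∧
    (∀ C : Subgroup K, C ∈ apIn p (⊤ : Subgroup K) →
      C ≤ H ⊓ Subgroup.centralizer (E : Set K) → C ≤ (E ⊔ C) ⊓ H) :=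
  statement5_general H E hE hEH

end QF
end
end

section
/- Let p be a prime, G a finite group, H ≤ G, and let B be a set of subgroups with A_p(H) ⊆ B ⊆ A_p(G). Put F_B(H) = {E ∈ B : E ∩ H = 1}, so that A_p(H) and F_B(H) are disjoint. Define a relation ≺ on the union X_B(H) = A_p(H) ∪ F_B(H) as follows: for A, A' ∈ A_p(H), A ≺ A' iff A < A' (proper inclusion); for F, F' ∈ F_B(H), F ≺ F' iff F < F' (proper inclusion); for F ∈ F_B(H) and A ∈ A_p(H), F ≺ A iff C_A(F) ≠ 1; and A ≺ F never holds. Then ≺ is a strict partial order (irreflexive and transitive) on X_B(H). -/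
attribute [local instance] Classical.propDecidable

noncomputable section

namespace QF

/-- The order relation `≺` on `X_B(H) = A_p(H) ∪ F_B(H)`. -/
def precX (p : ℕ) {G : Type*} [Group G] (H : Subgroup G) (B : Set (Subgroup G))
    (A A' : Subgroup G) : Prop :=
  (A ∈ apIn p H ∧ A' ∈ apIn p H ∧ A < A') ∨
  ((A ∈ B ∧ A ⊓ H = ⊥) ∧ (A' ∈ B ∧ A' ⊓ H = ⊥) ∧ A < A') ∨
  ((A ∈ B ∧ A ⊓ H = ⊥) ∧ A' ∈ apIn p H ∧
    A' ⊓ Subgroup.centralizer (A : Set G) ≠ ⊥)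

/-! A nontrivial subgroup of `H` meets `H` nontrivially, so `A_p(H)` and `F_B(H)` are disjoint and
an element of `A_p(H)` precedes only elements of `A_p(H)`. The remaining mixed cases are
transitive because `C_A(F)` is antitone in `F` and monotone in `A`. -/

section StrictOrder

variable {p : ℕ} {G : Type*} [Group G] {H : Subgroup G} {B : Set (Subgroup G)}

theorem inf_ne_bot_of_mem_apIn {A : Subgroup G} (hA : A ∈ apIn p H) : A ⊓ H ≠ ⊥ := by
  rw [inf_eq_left.mpr hA.2.2]
  exact hA.1

theorem inf_centralizer_ne_bot_mono {A A' F F' : Subgroup G} (hA : A ≤ A') (hF : F ≤ F')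
    (h : A ⊓ Subgroup.centralizer (F' : Set G) ≠ ⊥) :
    A' ⊓ Subgroup.centralizer (F : Set G) ≠ ⊥ :=
  ne_bot_of_le_ne_bot h (inf_le_inf hA (Subgroup.centralizer_le hF))

theorem precX_of_mem_apIn {A A' : Subgroup G} (hA : A ∈ apIn p H) (h : precX p H B A A') :
    A' ∈ apIn p H ∧ A < A' := by
  rcases h with ⟨-, hA', hlt⟩ | ⟨⟨-, hF⟩, -⟩ | ⟨⟨-, hF⟩, -⟩
  · exact ⟨hA', hlt⟩
  all_goals exact absurd hF (inf_ne_bot_of_mem_apIn hA)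

theorem precX_irrefl (A : Subgroup G) : ¬ precX p H B A A := by
  rintro (⟨-, -, hlt⟩ | ⟨-, -, hlt⟩ | ⟨⟨-, hF⟩, hA, -⟩)
  · exact lt_irrefl A hlt
  · exact lt_irrefl A hlt
  · exact inf_ne_bot_of_mem_apIn hA hF

theorem precX_trans {A A' A'' : Subgroup G} (h₁ : precX p H B A A') (h₂ : precX p H B A' A'') :
    precX p H B A A'' := by
  rcases h₁ with ⟨hA, hA', hlt⟩ | ⟨hF, ⟨-, hF'⟩, hlt⟩ | ⟨hF, hA', hc⟩
  · obtain ⟨hA'', hlt'⟩ := precX_of_mem_apIn hA' h₂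
    exact Or.inl ⟨hA, hA'', hlt.trans hlt'⟩
  · rcases h₂ with ⟨hA', -⟩ | ⟨-, hF'', hlt'⟩ | ⟨-, hA'', hc'⟩
    · exact absurd hF' (inf_ne_bot_of_mem_apIn hA')
    · exact Or.inr (Or.inl ⟨hF, hF'', hlt.trans hlt'⟩)
    · exact Or.inr (Or.inr ⟨hF, hA'', inf_centralizer_ne_bot_mono le_rfl hlt.le hc'⟩)
  · obtain ⟨hA'', hlt'⟩ := precX_of_mem_apIn hA' h₂
    exact Or.inr (Or.inr ⟨hF, hA'', inf_centralizer_ne_bot_mono hlt'.le le_rfl hc⟩)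

end StrictOrder

theorem statement6_general {p : ℕ} {G : Type*} [Group G]
    (H : Subgroup G) (B : Set (Subgroup G)) :
    (∀ A, ¬ precX p H B A A) ∧
    (∀ A A' A'', precX p H B A A' → precX p H B A' A'' → precX p H B A A'') :=
  ⟨precX_irrefl, fun _ _ _ => precX_trans⟩

/-- the relation `≺` on `X_B(H)` is a strict partial order
(irreflexive and transitive). -/
theorem statement6 {p : ℕ} (hp : p.Prime) {G : Type*} [Group G] [Finite G]
    (H : Subgroup G) (B : Set (Subgroup G))
    (hB1 : apIn p H ⊆ B) (hB2 : B ⊆ apIn p (⊤ : Subgroup G)) :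
    (∀ A, ¬ precX p H B A A) ∧
    (∀ A A' A'', precX p H B A A' → precX p H B A' A'' → precX p H B A A'') :=
  statement6_general H B

end QF
end
end
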